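/- arXiv:math/0603570 — 4 statements merged into one kernel-verified Lean document; each statement's English description precedes it below -/
import Mathlib

section
/- Let N ≥ 1, T > 0, let c : ℝ^N × [0,T] → ℝ be continuous satisfying (H1) with constants L1, L1', let u0 : ℝ^N → ℝ be Lipschitz continuous with {x : u0(x) ≥ 0} ⊆ B̄(0,R0) for some R0 > 0, and let u be the continuous viscosity solution of u_t = c(x,t)|Du| with initial datum u0. Then for every t ∈ [0,T]: {x ∈ ℝ^N : u(x,t) ≥ 0} ⊆ B̄(0, R0 + L1' t). -/
open Set MeasureTheory Filter Metric
open scoped Topology ENNReal NNReal RealInnerProductSpace symmDiff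

noncomputable section

/-- Euclidean space ℝ^N. -/
abbrev Euc (N : ℕ) := EuclideanSpace ℝ (Fin N)

/-- The Fréchet superdifferential D⁺v(x): the set of p with
limsup_{y→x} (v(y) − v(x) − ⟨p, y−x⟩)/|y−x| ≤ 0. -/
def SuperDiff {N : ℕ} (v : Euc N → ℝ) (x : Euc N) : Set (Euc N) :=
  {p | ∀ ε > 0, ∀ᶠ y in 𝓝[≠] x, (v y - v x - ⟪p, y - x⟫) / ‖y - x‖ ≤ ε}

/-- Semiconvexity with constant C: v(x+h) − 2v(x) + v(x−h) ≥ −C|h|². -/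
def Semiconvex {N : ℕ} (C : ℝ) (v : Euc N → ℝ) : Prop :=
  ∀ x h : Euc N, v (x + h) - 2 * v x + v (x - h) ≥ -C * ‖h‖ ^ 2

/-- Viscosity solution of u_t = c(x,t)|Du| on ℝ^N × (0,T) with initial datum u0. -/
def IsViscositySolution (N : ℕ) (T : ℝ) (c u : Euc N → ℝ → ℝ) (u0 : Euc N → ℝ) : Prop :=
  (∀ x, u x 0 = u0 x) ∧
  ∀ φ : Euc N → ℝ → ℝ,
    ContDiff ℝ 1 (fun p : Euc N × ℝ => φ p.1 p.2) →
    ∀ x0 : Euc N, ∀ t0 ∈ Set.Ioo 0 T,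
      (IsLocalMaxOn (fun p : Euc N × ℝ => u p.1 p.2 - φ p.1 p.2)
          (Set.univ ×ˢ Set.Icc 0 T) (x0, t0) →
        deriv (φ x0) t0 ≤ c x0 t0 * ‖gradient (fun x => φ x t0) x0‖) ∧
      (IsLocalMinOn (fun p : Euc N × ℝ => u p.1 p.2 - φ p.1 p.2)
          (Set.univ ×ˢ Set.Icc 0 T) (x0, t0) →
        deriv (φ x0) t0 ≥ c x0 t0 * ‖gradient (fun x => φ x t0) x0‖)

/-!
Fix `x̄` with `‖x̄‖ ≥ R0 + L1' t̄ + δ`. On the cylinder `B̄(x̄, L1' t̄ + δ/2) × [0, T]` the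
function `φ = -η/2 + B exp (λ w)`, with `w(x, t) = √(‖x - x̄‖² + ε²) - ε + L1' (t - t̄)`, is a
strict classical supersolution, because `∂ₜw = L1' > L1' ‖Dw‖ ≥ c ‖Dw‖`. For `λ` large it
dominates `u` on the lateral boundary and at `t = T`, while the base of the cylinder lies in a
compact annulus beyond `R0`, where `u0 ≤ -η`. The maximum of `u - φ` over the cylinder cannot be
interior, so `u(x̄, t̄) ≤ φ(x̄, t̄) = -3η/8` for every `t̄ < T`, and continuity in time reaches
`t̄ = T`.
-/

theorem HasDerivAt.comp_hasGradientAt {E : Type*} [NormedAddCommGroup E] [InnerProductSpace ℝ E]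
    [CompleteSpace E] {f : E → ℝ} {g x : E} {h : ℝ → ℝ} {h' : ℝ}
    (hh : HasDerivAt h h' (f x)) (hf : HasGradientAt f g x) :
    HasGradientAt (h ∘ f) (h' • g) x := by
  rw [hasGradientAt_iff_hasFDerivAt] at hf ⊢
  refine (hh.comp_hasFDerivAt x hf).congr_fderiv ?_
  ext y
  simp

section SmoothCone

variable {E : Type*} [NormedAddCommGroup E]

def smoothCone (x₀ : E) (t₀ L ε : ℝ) (x : E) (t : ℝ) : ℝ :=
  √(‖x - x₀‖ ^ 2 + ε ^ 2) - ε + L * (t - t₀)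

variable {x₀ : E} {t₀ L ε : ℝ}

theorem contDiff_smoothCone [InnerProductSpace ℝ E] {n : WithTop ℕ∞} (hε : ε ≠ 0) :
    ContDiff ℝ n (fun p : E × ℝ => smoothCone x₀ t₀ L ε p.1 p.2) := by
  unfold smoothCone
  have hpos : ∀ p : E × ℝ, ‖p.1 - x₀‖ ^ 2 + ε ^ 2 ≠ 0 := fun p => by positivity
  exact (((contDiff_fst.sub contDiff_const).norm_sq ℝ |>.add contDiff_const).sqrt hpos |>.sub
    contDiff_const).add (contDiff_const.mul (contDiff_snd.sub contDiff_const))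

theorem hasGradientAt_smoothCone [InnerProductSpace ℝ E] [CompleteSpace E] (hε : ε ≠ 0)
    (x : E) (t : ℝ) :
    HasGradientAt (fun y => smoothCone x₀ t₀ L ε y t)
      ((√(‖x - x₀‖ ^ 2 + ε ^ 2))⁻¹ • (x - x₀)) x := by
  have hpos : 0 < ‖x - x₀‖ ^ 2 + ε ^ 2 := by positivity
  have h := ((((hasFDerivAt_id x).sub_const x₀).norm_sq.add_const (ε ^ 2)).sqrt
    hpos.ne').sub_const ε |>.add_const (L * (t - t₀))
  rw [hasGradientAt_iff_hasFDerivAt]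
  refine h.congr_fderiv ?_
  ext y
  have := Real.sqrt_pos.2 hpos
  simp only [id_eq, one_div, mul_inv_rev, map_sub, ContinuousLinearMap.comp_id, smul_apply,
    sub_apply, coe_innerSL_apply, nsmul_eq_mul, Nat.cast_ofNat, smul_eq_mul, map_smul,
    InnerProductSpace.toDual_apply_apply]
  field_simp

theorem norm_gradient_smoothCone_lt_one [InnerProductSpace ℝ E] [CompleteSpace E] (hε : ε ≠ 0)
    (x : E) (t : ℝ) :
    ‖gradient (fun y => smoothCone x₀ t₀ L ε y t) x‖ < 1 := by
  rw [(hasGradientAt_smoothCone hε x t).gradient, norm_smul, norm_inv, Real.norm_eq_abs,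
    abs_of_nonneg (Real.sqrt_nonneg _), inv_mul_lt_one₀ (by positivity)]
  exact Real.lt_sqrt_of_sq_lt (by simpa using pow_pos (abs_pos.2 hε) 2)

theorem hasDerivAt_smoothCone (x : E) (t : ℝ) :
    HasDerivAt (smoothCone x₀ t₀ L ε x) L t := by
  have := (((hasDerivAt_id t).sub_const t₀).const_mul L).const_add (√(‖x - x₀‖ ^ 2 + ε ^ 2) - ε)
  rwa [mul_one] at this

theorem smoothCone_self (hε : 0 ≤ ε) : smoothCone x₀ t₀ L ε x₀ t₀ = 0 := by
  simp [smoothCone, Real.sqrt_sq hε]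

theorem norm_sub_sub_add_le_smoothCone (x : E) (t : ℝ) :
    ‖x - x₀‖ - ε + L * (t - t₀) ≤ smoothCone x₀ t₀ L ε x t := by
  have := Real.le_sqrt_of_sq_le (le_add_of_nonneg_right (sq_nonneg ε) : ‖x - x₀‖ ^ 2 ≤ _)
  unfold smoothCone; linarith

theorem mul_sub_le_smoothCone (x : E) (t : ℝ) :
    L * (t - t₀) ≤ smoothCone x₀ t₀ L ε x t := by
  have := Real.le_sqrt_of_sq_le (le_add_of_nonneg_left (sq_nonneg ‖x - x₀‖) : ε ^ 2 ≤ _)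
  unfold smoothCone; linarith

theorem mul_norm_gradient_lt_deriv_exp_smoothCone [InnerProductSpace ℝ E] [CompleteSpace E]
    {a B lam k : ℝ} (hε : ε ≠ 0) (hL : 0 < L) (hB : 0 < B) (hlam : 0 < lam) (hk : |k| ≤ L)
    (x : E) (t : ℝ) :
    k * ‖gradient (fun y => a + B * Real.exp (lam * smoothCone x₀ t₀ L ε y t)) x‖ <
      deriv (fun s => a + B * Real.exp (lam * smoothCone x₀ t₀ L ε x s)) t := by
  set e := B * (Real.exp (lam * smoothCone x₀ t₀ L ε x t) * lam)
  have he : 0 < e := by positivity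
  have hexp : HasDerivAt (fun r => a + B * Real.exp (lam * r)) e (smoothCone x₀ t₀ L ε x t) := by
    have := (((hasDerivAt_id (smoothCone x₀ t₀ L ε x t)).const_mul lam).exp.const_mul B).const_add
      a
    rwa [mul_one] at this
  have hgrad : HasGradientAt (fun y => a + B * Real.exp (lam * smoothCone x₀ t₀ L ε y t))
      (e • (√(‖x - x₀‖ ^ 2 + ε ^ 2))⁻¹ • (x - x₀)) x :=
    hexp.comp_hasGradientAt (f := fun y => smoothCone x₀ t₀ L ε y t)
      (hasGradientAt_smoothCone hε x t)
  have htime :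
      HasDerivAt (fun s => a + B * Real.exp (lam * smoothCone x₀ t₀ L ε x s)) (e * L) t :=
    hexp.comp t (hasDerivAt_smoothCone x t)
  have hgrad_lt := norm_gradient_smoothCone_lt_one (x₀ := x₀) (t₀ := t₀) (L := L) hε x t
  rw [(hasGradientAt_smoothCone hε x t).gradient] at hgrad_lt
  rw [htime.deriv, hgrad.gradient, norm_smul, Real.norm_eq_abs, abs_of_pos he]
  calc k * (e * _) ≤ L * (e * _) :=
        mul_le_mul_of_nonneg_right ((le_abs_self k).trans hk) (by positivity)
    _ < L * (e * 1) := by gcongr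
    _ = e * L := by ring

end SmoothCone

theorem IsViscositySolution.le_of_strictSupersolution {N : ℕ} {T : ℝ} {c u : Euc N → ℝ → ℝ}
    {u0 : Euc N → ℝ} (hsol : IsViscositySolution N T c u u0)
    (hu : ContinuousOn (fun p : Euc N × ℝ => u p.1 p.2) (univ ×ˢ Icc 0 T))
    {φ : Euc N → ℝ → ℝ} (hφ : ContDiff ℝ 1 (fun p : Euc N × ℝ => φ p.1 p.2)) {x₀ : Euc N} {ρ : ℝ}
    (hstrict : ∀ x ∈ ball x₀ ρ, ∀ t ∈ Ioo 0 T,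
      c x t * ‖gradient (fun y => φ y t) x‖ < deriv (φ x) t)
    (hbdry : ∀ x ∈ closedBall x₀ ρ, ∀ t ∈ Icc 0 T,
      x ∉ ball x₀ ρ ∨ t = 0 ∨ t = T → u x t ≤ φ x t)
    {x : Euc N} (hx : x ∈ closedBall x₀ ρ) {t : ℝ} (ht : t ∈ Icc 0 T) : u x t ≤ φ x t := by
  obtain ⟨⟨y, s⟩, ⟨hy, hs⟩, hmax⟩ :=
    ((isCompact_closedBall x₀ ρ).prod isCompact_Icc).exists_isMaxOn ⟨(x, t), hx, ht⟩
      ((hu.mono (prod_mono (subset_univ _) subset_rfl)).sub hφ.continuous.continuousOn)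
  suffices u y s ≤ φ y s by
    have : u x t - φ x t ≤ u y s - φ y s := hmax (show (x, t) ∈ _ ×ˢ _ from ⟨hx, ht⟩)
    linarith
  by_contra hlt
  have hy_int : y ∈ ball x₀ ρ := by_contra fun h => hlt (hbdry y hy s hs (Or.inl h))
  have hs_int : s ∈ Ioo 0 T :=
    ⟨hs.1.lt_of_ne fun h => hlt (hbdry y hy s hs (Or.inr (Or.inl h.symm))),
      hs.2.lt_of_ne fun h => hlt (hbdry y hy s hs (Or.inr (Or.inr h)))⟩
  have hnhds : closedBall x₀ ρ ×ˢ Icc 0 T ∈ 𝓝[univ ×ˢ Icc 0 T] (y, s) :=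
    mem_nhdsWithin.2 ⟨ball x₀ ρ ×ˢ univ, isOpen_ball.prod isOpen_univ, ⟨hy_int, trivial⟩,
      fun p hp => ⟨ball_subset_closedBall hp.1.1, hp.2.2⟩⟩
  exact (hstrict y hy_int s hs_int).not_ge
    ((hsol.2 φ hφ y s hs_int).1 (mem_of_superset hnhds hmax))

theorem IsCompact.exists_pos_forall_le_neg {X : Type*} [TopologicalSpace X] {K : Set X}
    {f : X → ℝ} (hK : IsCompact K) (hf : ContinuousOn f K) (hneg : ∀ x ∈ K, f x < 0) :
    ∃ η > 0, ∀ x ∈ K, f x ≤ -η := by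
  obtain ⟨η, hη, h⟩ := hK.exists_forall_le' hf.neg (a := 0) fun x hx => neg_pos.2 (hneg x hx)
  exact ⟨η, hη, fun x hx => le_neg.2 (h x hx)⟩

theorem IsViscositySolution.le_neg_of_outside_cone {N : ℕ} {T L R0 δ η M tb : ℝ}
    {c u : Euc N → ℝ → ℝ} {u0 : Euc N → ℝ} (hsol : IsViscositySolution N T c u u0)
    (hu : ContinuousOn (fun p : Euc N × ℝ => u p.1 p.2) (univ ×ˢ Icc 0 T))
    (hL : 0 < L) (hc : ∀ x, ∀ t ∈ Icc 0 T, |c x t| ≤ L) {xb : Euc N} (hδ : 0 < δ) (hη : 0 < η)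
    (hu0 : ∀ x ∈ closedBall 0 (‖xb‖ + (L * T + δ)) \ ball 0 (R0 + δ / 2), u0 x ≤ -η)
    (hM : ∀ p ∈ closedBall xb (L * T + δ) ×ˢ Icc 0 T, u p.1 p.2 ≤ M)
    (htb : tb ∈ Ico 0 T) (hxb : R0 + L * tb + δ ≤ ‖xb‖) : u xb tb ≤ -(3 * η / 8) := by
  set ρ := L * tb + δ / 2 with hρ_def
  have hρ : 0 ≤ ρ := by nlinarith [htb.1]
  set ε := δ / 8 with hε_def
  set B := η / 8
  have hB : 0 < B := by positivity
  set a := min (3 * δ / 8) (L * (T - tb))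
  have ha : 0 < a := lt_min (by positivity) (mul_pos hL (sub_pos.2 htb.2))
  set lam := (|M| + η) / (B * a)
  have hlam : 0 < lam := by positivity
  set φ : Euc N → ℝ → ℝ := fun x t => -(η / 2) + B * Real.exp (lam * smoothCone xb tb L ε x t)
  have hφ_ge : ∀ x t, -(η / 2) ≤ φ x t := fun x t => le_add_of_nonneg_right (by positivity)
  have hφ_large : ∀ x t, a ≤ smoothCone xb tb L ε x t → M ≤ φ x t := fun x t hw => by
    have h1 :=
      mul_le_mul_of_nonneg_left (Real.add_one_le_exp (lam * smoothCone xb tb L ε x t)) hB.le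
    have h2 := mul_le_mul_of_nonneg_left (mul_le_mul_of_nonneg_left hw hlam.le) hB.le
    have h3 : lam * (B * a) = |M| + η := div_mul_cancel₀ _ (by positivity)
    have h4 := le_abs_self M
    simp only [φ]
    nlinarith
  have hbdry : ∀ x ∈ closedBall xb ρ, ∀ t ∈ Icc 0 T,
      x ∉ ball xb ρ ∨ t = 0 ∨ t = T → u x t ≤ φ x t := by
    intro x hx t ht hx_bdry
    rw [mem_closedBall, dist_eq_norm] at hx
    have hρT : ρ ≤ L * T + δ := by nlinarith [htb.2]
    have huM : u x t ≤ M := hM (x, t) ⟨mem_closedBall_iff_norm.2 (hx.trans hρT), ht⟩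
    rcases hx_bdry with hx_out | rfl | htT
    · rw [mem_ball, dist_eq_norm, not_lt] at hx_out
      refine huM.trans (hφ_large x t ?_)
      have := norm_sub_sub_add_le_smoothCone (x₀ := xb) (t₀ := tb) (L := L) (ε := ε) x t
      nlinarith [min_le_left (3 * δ / 8) (L * (T - tb)), mul_nonneg hL.le ht.1]
    · have hx_annulus : x ∈ closedBall 0 (‖xb‖ + (L * T + δ)) \ ball 0 (R0 + δ / 2) := by
        refine ⟨mem_closedBall_zero_iff.2 ?_, fun h => ?_⟩
        · linarith [norm_sub_norm_le x xb]
        · linarith [mem_ball_zero_iff.1 h, norm_sub_norm_le xb x, norm_sub_rev x xb]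
      rw [hsol.1]
      linarith [hu0 x hx_annulus, hφ_ge x 0]
    · subst htT
      exact huM.trans (hφ_large x t ((min_le_right _ _).trans (mul_sub_le_smoothCone x t)))
  have hcone := hsol.le_of_strictSupersolution hu
    (contDiff_const.add (contDiff_const.mul (contDiff_const.mul
      (contDiff_smoothCone (by positivity))).exp))
    (fun x _ t ht => mul_norm_gradient_lt_deriv_exp_smoothCone (by positivity) hL
      hB hlam (hc x t (Ioo_subset_Icc_self ht)) x t)
    hbdry (mem_closedBall_self hρ) ⟨htb.1, htb.2.le⟩
  calc u xb tb ≤ φ xb tb := hcone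
    _ = -(3 * η / 8) := by
      simp only [φ, smoothCone_self (by positivity : 0 ≤ ε), mul_zero, Real.exp_zero, mul_one]
      ring

theorem IsViscositySolution.exists_le_neg_outside_cone {N : ℕ} {T L R0 : ℝ}
    {c u : Euc N → ℝ → ℝ} {u0 : Euc N → ℝ} (hsol : IsViscositySolution N T c u u0)
    (hu : ContinuousOn (fun p : Euc N × ℝ => u p.1 p.2) (univ ×ˢ Icc 0 T))
    (hL : 0 < L) (hc : ∀ x, ∀ t ∈ Icc 0 T, |c x t| ≤ L) (hu0 : Continuous u0)
    (hsupp : {x | 0 ≤ u0 x} ⊆ closedBall 0 R0) (xb : Euc N) {δ : ℝ} (hδ : 0 < δ) :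
    ∃ γ > 0, ∀ tb ∈ Ico 0 T, R0 + L * tb + δ ≤ ‖xb‖ → u xb tb ≤ -γ := by
  have hK : IsCompact (closedBall (0 : Euc N) (‖xb‖ + (L * T + δ)) \ ball 0 (R0 + δ / 2)) :=
    (isCompact_closedBall _ _).diff isOpen_ball
  obtain ⟨η, hη, hu0_neg⟩ := hK.exists_pos_forall_le_neg hu0.continuousOn fun x hx =>
    not_le.1 fun h => hx.2 <| mem_ball_zero_iff.2 <| by
      linarith [mem_closedBall_zero_iff.1 (hsupp h)]
  obtain ⟨M, hM⟩ := ((isCompact_closedBall xb (L * T + δ)).prod isCompact_Icc).bddAbove_image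
    (hu.mono (prod_mono (subset_univ _) subset_rfl))
  exact ⟨3 * η / 8, by positivity, fun tb htb hxb =>
    hsol.le_neg_of_outside_cone hu hL hc hδ hη hu0_neg (fun p hp => hM ⟨p, hp, rfl⟩) htb hxb⟩

theorem stmt5_general (N : ℕ) (T : ℝ) (hT : 0 < T)
    (c : Euc N → ℝ → ℝ)
    (L1 L1' : ℝ) (hL1' : 0 < L1')
    (hH1 : ∀ x y : Euc N, ∀ t ∈ Set.Icc (0 : ℝ) T,
      |c x t - c y t| ≤ L1 * ‖x - y‖ ∧ |c x t| ≤ L1')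
    (u0 : Euc N → ℝ) (K : ℝ≥0) (hu0 : LipschitzWith K u0)
    (R0 : ℝ) (hu0supp : {x : Euc N | 0 ≤ u0 x} ⊆ closedBall 0 R0)
    (u : Euc N → ℝ → ℝ)
    (huc : ContinuousOn (fun p : Euc N × ℝ => u p.1 p.2)
      ((Set.univ : Set (Euc N)) ×ˢ Set.Icc (0 : ℝ) T))
    (husol : IsViscositySolution N T c u u0) :
    ∀ t ∈ Set.Icc (0 : ℝ) T, {x : Euc N | 0 ≤ u x t} ⊆ closedBall 0 (R0 + L1' * t) := by
  intro t ht x hx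
  by_contra hout
  rw [mem_closedBall_zero_iff, not_le] at hout
  obtain ⟨γ, hγ, hneg⟩ := husol.exists_le_neg_outside_cone huc hL1'
    (fun y s hs => (hH1 y y s hs).2) hu0.continuous hu0supp x (sub_pos.2 hout)
  have hbefore : MapsTo (u x) (Ico 0 t) (Iic (-γ)) := fun s hs =>
    hneg s ⟨hs.1, hs.2.trans_le ht.2⟩ (by nlinarith [hs.2])
  have hxt : u x t ≤ -γ := by
    rcases ht.2.lt_or_eq with hlt | rfl
    · exact hneg t ⟨ht.1, hlt⟩ (by linarith)
    · have hcont : ContinuousWithinAt (u x) (Ico 0 t) t :=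
        ((huc.comp (continuous_const.prodMk continuous_id).continuousOn
          fun s hs => ⟨trivial, hs⟩) t ⟨hT.le, le_rfl⟩).mono Ico_subset_Icc_self
      have := hcont.mem_closure (by rw [closure_Ico hT.ne]; exact ⟨hT.le, le_rfl⟩) hbefore
      rwa [closure_Iic] at this
  exact (not_le.2 (hxt.trans_lt (neg_neg_of_pos hγ))) hx

/-- finite speed of propagation — bound on the size of the front. -/
theorem stmt5 (N : ℕ) (hN : 1 ≤ N) (T : ℝ) (hT : 0 < T)
    (c : Euc N → ℝ → ℝ)
    (hc : ContinuousOn (fun p : Euc N × ℝ => c p.1 p.2)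
      ((Set.univ : Set (Euc N)) ×ˢ Set.Icc (0 : ℝ) T))
    (L1 L1' : ℝ) (hL1 : 0 < L1) (hL1' : 0 < L1')
    (hH1 : ∀ x y : Euc N, ∀ t ∈ Set.Icc (0 : ℝ) T,
      |c x t - c y t| ≤ L1 * ‖x - y‖ ∧ |c x t| ≤ L1')
    (u0 : Euc N → ℝ) (K : ℝ≥0) (hu0 : LipschitzWith K u0)
    (R0 : ℝ) (hR0 : 0 < R0) (hu0supp : {x : Euc N | 0 ≤ u0 x} ⊆ closedBall 0 R0)
    (u : Euc N → ℝ → ℝ)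
    (huc : ContinuousOn (fun p : Euc N × ℝ => u p.1 p.2)
      ((Set.univ : Set (Euc N)) ×ˢ Set.Icc (0 : ℝ) T))
    (husol : IsViscositySolution N T c u u0) :
    ∀ t ∈ Set.Icc (0 : ℝ) T, {x : Euc N | 0 ≤ u x t} ⊆ closedBall 0 (R0 + L1' * t) :=
  stmt5_general N T hT c L1 L1' hL1' hH1 u0 K hu0 R0 hu0supp u huc husol
end
end

section
/- Let N ≥ 1, let v : ℝ^N → ℝ be semiconvex with constant C > 0, let η0 > 0 be such that |v(x)| + |p| ≥ η0 for every x ∈ ℝ^N and every p ∈ D⁺v(x), and let E ⊆ ℝ^N be a closed set such that the interior of E equals {x : v(x) > 0} and the boundary of E equals {x : v(x) = 0}. Then E satisfies the interior ball property of radius η0/C. -/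
/-!
Adding `C/2 ‖·‖²` turns a `C`-semiconvex `v` into a midpoint convex function. Since `v < 0` off
`E`, that function is bounded above on a ball, hence continuous, and then a superdifferential `p`
of `v` at `x₁` gives the global bound `v ≥ v x₁ + ⟪p, · - x₁⟫ - C/2 ‖· - x₁‖²`: the closed ball of
radius `t ≤ ‖p‖ / C` tangent at `x₁` in direction `p` lies in `{v ≥ v x₁}`. Points outside `E`
where `v` has a superdifferential are dense in the complement (maximise `v - K ‖· - z‖²`), so they
accumulate at every `x ∈ ∂E`. There `‖p‖ ≥ η₀ + v x₁ → η₀`, and along a subsequence the tangent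
balls of radius `(η₀ + v x₁) / C` converge to a ball of radius `η₀ / C`, contained in
`{v ≥ 0} = E`.
-/

open Set MeasureTheory Filter Metric
open scoped Topology ENNReal NNReal RealInnerProductSpace symmDiff

noncomputable section

def MidpointConvex {E : Type*} [AddCommGroup E] (g : E → ℝ) : Prop :=
  ∀ x h : E, 2 * g x ≤ g (x + h) + g (x - h)

namespace MidpointConvex

section Module

variable {E : Type*} [AddCommGroup E] [Module ℝ E] {g : E → ℝ}

theorem apply_add_dyadic_smul_le (hg : MidpointConvex g) (k : ℕ) (x y : E) :
    g (x + (2⁻¹ : ℝ) ^ k • (y - x)) ≤ (1 - (2⁻¹ : ℝ) ^ k) * g x + (2⁻¹ : ℝ) ^ k * g y := by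
  induction k with
  | zero => simp
  | succ k ih =>
    set s : ℝ := (2⁻¹ : ℝ) ^ k
    have hmid := hg (x + (s / 2) • (y - x)) ((s / 2) • (y - x))
    rw [show x + (s / 2) • (y - x) + (s / 2) • (y - x) = x + s • (y - x) by module,
      show x + (s / 2) • (y - x) - (s / 2) • (y - x) = x by module] at hmid
    rw [show (2⁻¹ : ℝ) ^ (k + 1) = s / 2 by rw [pow_succ]; ring]
    linarith

end Module

section Normed

variable {E : Type*} [NormedAddCommGroup E] [NormedSpace ℝ E] {g : E → ℝ}

theorem le_on_ball_of_le_on_ball (hg : MidpointConvex g) {z : E} {δ M : ℝ}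
    (hM : ∀ u ∈ ball z δ, g u ≤ M) (y : E) :
    ∀ u ∈ ball y (δ / 2), g u ≤ (g ((2 : ℝ) • y - z) + M) / 2 := by
  intro u hu
  have hmid := hg u (((2 : ℝ) • y - z) - u)
  rw [add_sub_cancel, show u - ((2 : ℝ) • y - z - u) = z + (2 : ℝ) • (u - y) by module] at hmid
  have hmem : z + (2 : ℝ) • (u - y) ∈ ball z δ := by
    rw [mem_ball_iff_norm, add_sub_cancel_left, norm_smul, Real.norm_two]
    rw [mem_ball_iff_norm] at hu
    linarith
  linarith [hM _ hmem]

theorem sub_le_of_le_on_ball (hg : MidpointConvex g) {y : E} {ρ K : ℝ}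
    (hK : ∀ u ∈ ball y ρ, g u ≤ K) (k : ℕ) :
    ∀ u ∈ ball y ((2⁻¹ : ℝ) ^ k * ρ), g u - g y ≤ (2⁻¹ : ℝ) ^ k * (K - g y) := by
  intro u hu
  set s : ℝ := (2⁻¹ : ℝ) ^ k
  have hs : 0 < s := by positivity
  have hmem : y + s⁻¹ • (u - y) ∈ ball y ρ := by
    rw [mem_ball_iff_norm, add_sub_cancel_left, norm_smul, norm_inv, Real.norm_of_nonneg hs.le,
      inv_mul_lt_iff₀ hs, ← mem_ball_iff_norm]
    exact hu
  have hdy := hg.apply_add_dyadic_smul_le k y (y + s⁻¹ • (u - y))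
  rw [add_sub_cancel_left, smul_smul, mul_inv_cancel₀ hs.ne', one_smul, add_sub_cancel] at hdy
  change _ ≤ (1 - s) * g y + s * _ at hdy
  nlinarith [hK _ hmem]

theorem continuousAt_of_le_on_ball (hg : MidpointConvex g) {y : E} {ρ K : ℝ} (hρ : 0 < ρ)
    (hK : ∀ u ∈ ball y ρ, g u ≤ K) : ContinuousAt g y := by
  rw [Metric.continuousAt_iff]
  intro ε hε
  have hKy : g y ≤ K := hK y (mem_ball_self hρ)
  obtain ⟨k, hk⟩ : ∃ k : ℕ, (2⁻¹ : ℝ) ^ k * (K - g y) < ε := by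
    have := tendsto_pow_atTop_nhds_zero_of_lt_one (r := (2⁻¹ : ℝ)) (by norm_num) (by norm_num)
    simpa using ((this.mul_const (K - g y)).eventually (gt_mem_nhds (by simpa using hε))).exists
  refine ⟨(2⁻¹ : ℝ) ^ k * ρ, by positivity, fun u hu => ?_⟩
  have hu' : (2 : ℝ) • y - u ∈ ball y ((2⁻¹ : ℝ) ^ k * ρ) := by
    rw [mem_ball, dist_eq_norm, show (2 : ℝ) • y - u - y = -(u - y) by module, norm_neg,
      ← dist_eq_norm]
    exact hu
  have hupper := hg.sub_le_of_le_on_ball hK k u hu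
  have hlower := hg.sub_le_of_le_on_ball hK k _ hu'
  have hmid := hg y (u - y)
  rw [add_sub_cancel, show y - (u - y) = (2 : ℝ) • y - u by module] at hmid
  rw [Real.dist_eq, abs_sub_lt_iff]
  constructor <;> linarith

theorem continuous_of_le_on_ball (hg : MidpointConvex g) {z : E} {δ M : ℝ} (hδ : 0 < δ)
    (hM : ∀ u ∈ ball z δ, g u ≤ M) : Continuous g :=
  continuous_iff_continuousAt.2 fun y =>
    hg.continuousAt_of_le_on_ball (half_pos hδ) (hg.le_on_ball_of_le_on_ball hM y)

end Normed

end MidpointConvex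

theorem hasFDerivAt_mul_norm_sub_sq {F : Type*} [NormedAddCommGroup F] [InnerProductSpace ℝ F]
    (c : ℝ) (z x : F) :
    HasFDerivAt (fun u => c * ‖u - z‖ ^ 2) (innerSL ℝ ((2 * c) • (x - z))) x := by
  refine ((((hasFDerivAt_id x).sub_const z).norm_sq).const_mul c).congr_fderiv ?_
  ext u
  simp
  ring

theorem norm_sq_le_two_mul_inner_of_norm_sub_smul_le {F : Type*} [NormedAddCommGroup F]
    [InnerProductSpace ℝ F] {d e : F} {t : ℝ} (he : ‖e‖ = 1) (hd : ‖d - t • e‖ ≤ t) :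
    ‖d‖ ^ 2 ≤ 2 * t * ⟪e, d⟫ := by
  have ht : 0 ≤ t := (norm_nonneg _).trans hd
  have h := pow_le_pow_left₀ (norm_nonneg _) hd 2
  rw [norm_sub_sq_real, real_inner_smul_right, norm_smul, Real.norm_of_nonneg ht, he,
    real_inner_comm] at h
  linarith

theorem eq_setOf_nonneg_of_interior_of_frontier {X : Type*} [TopologicalSpace X] {E : Set X}
    {v : X → ℝ} (hE : IsClosed E) (hint : interior E = {x | 0 < v x})
    (hfr : frontier E = {x | v x = 0}) : E = {x | 0 ≤ v x} := by
  rw [← hE.closure_eq, closure_eq_interior_union_frontier, hint, hfr]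
  ext x
  simp [le_iff_lt_or_eq, eq_comm]

theorem Filter.Tendsto.eventually_mem_closedBall {ι X : Type*} [PseudoMetricSpace X]
    {l : Filter ι} {c : ι → X} {t : ι → ℝ} {c₀ : X} {r : ℝ} (hc : Tendsto c l (𝓝 c₀))
    (ht : Tendsto t l (𝓝 r)) {y : X} (hy : y ∈ ball c₀ r) :
    ∀ᶠ i in l, y ∈ closedBall (c i) (t i) :=
  ((tendsto_const_nhds.dist hc).eventually_lt ht hy).mono fun _ hi => hi.le

section SuperDiff

variable {N : ℕ} {v g : Euc N → ℝ} {x p q : Euc N} {C : ℝ}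

theorem mem_superDiff_iff :
    p ∈ SuperDiff v x ↔ ∀ ε > 0, ∀ᶠ y in 𝓝 x, v y - v x - ⟪p, y - x⟫ ≤ ε * ‖y - x‖ := by
  refine forall₂_congr fun ε _ => ?_
  rw [eventually_nhdsWithin_iff]
  refine eventually_congr (Eventually.of_forall fun y => ?_)
  rcases eq_or_ne y x with rfl | hne
  · simp
  · have hpos : 0 < ‖y - x‖ := norm_pos_iff.2 (sub_ne_zero.2 hne)
    simp [hne, div_le_iff₀ hpos]

theorem HasFDerivAt.mem_superDiff (hg : HasFDerivAt g (innerSL ℝ q) x) : q ∈ SuperDiff g x :=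
  mem_superDiff_iff.2 fun _ hε => (hg.isLittleO.def hε).mono fun _ hy =>
    (le_abs_self _).trans (by simpa using hy)

theorem add_mem_superDiff_add (hp : p ∈ SuperDiff v x) (hq : q ∈ SuperDiff g x) :
    p + q ∈ SuperDiff (fun y => v y + g y) x := by
  rw [mem_superDiff_iff] at *
  intro ε hε
  filter_upwards [hp (ε / 2) (half_pos hε), hq (ε / 2) (half_pos hε)] with y hpy hqy
  rw [inner_add_left]
  linarith

theorem mem_superDiff_of_isLocalMax_sub (hmax : IsLocalMax (fun y => v y - g y) x)
    (hq : q ∈ SuperDiff g x) : q ∈ SuperDiff v x := by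
  rw [mem_superDiff_iff] at *
  intro ε hε
  filter_upwards [hmax, hq ε hε] with y hmy hqy
  linarith

theorem exists_superDiff_nonempty (hv : Continuous v) {U : Set (Euc N)} {z : Euc N}
    (hU : U ∈ 𝓝 z) : ∃ x ∈ U, (SuperDiff v x).Nonempty := by
  have hS : {u | u ∈ U ∧ v u < v z + 1} ∈ 𝓝 z :=
    inter_mem hU ((hv.tendsto z).eventually (gt_mem_nhds (lt_add_one _)))
  obtain ⟨ρ, hρ, hρS⟩ := nhds_basis_closedBall.mem_iff.1 hS
  -- `K ρ² = 2` exceeds the oscillation `v - v z < 1`, so the maximiser below is interior.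
  set K : ℝ := 2 / ρ ^ 2
  have hcont : Continuous fun u => v u - K * ‖u - z‖ ^ 2 := by fun_prop
  obtain ⟨x, hx, hmax⟩ := (isCompact_closedBall z ρ).exists_isMaxOn
    ⟨z, mem_closedBall_self hρ.le⟩ hcont.continuousOn
  have hzx : v z ≤ v x - K * ‖x - z‖ ^ 2 := by simpa using hmax (mem_closedBall_self hρ.le)
  obtain ⟨hxU, hvx⟩ := hρS hx
  have hxz : ‖x - z‖ < ρ := by
    by_contra! h
    have hρx : ρ ^ 2 ≤ ‖x - z‖ ^ 2 := pow_le_pow_left₀ hρ.le h 2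
    have hK : K * ρ ^ 2 = 2 := div_mul_cancel₀ 2 (by positivity)
    nlinarith [mul_le_mul_of_nonneg_left hρx (by positivity : (0 : ℝ) ≤ K)]
  have hloc : IsLocalMax (fun u => v u - K * ‖u - z‖ ^ 2) x :=
    hmax.isLocalMax (mem_of_superset (isOpen_ball.mem_nhds (mem_ball_iff_norm.2 hxz))
      ball_subset_closedBall)
  exact ⟨x, hxU, _,
    mem_superDiff_of_isLocalMax_sub hloc (hasFDerivAt_mul_norm_sub_sq K z x).mem_superDiff⟩

theorem closure_setOf_superDiff_nonempty (hv : Continuous v) {U : Set (Euc N)} (hU : IsOpen U) :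
    closure {x ∈ U | (SuperDiff v x).Nonempty} = closure U := by
  refine (closure_mono (sep_subset _ _)).antisymm
    (closure_minimal (fun z hz => ?_) isClosed_closure)
  rw [mem_closure_iff_nhds]
  intro W hW
  obtain ⟨x, ⟨hxW, hxU⟩, hx⟩ := exists_superDiff_nonempty hv (inter_mem hW (hU.mem_nhds hz))
  exact ⟨x, hxW, hxU, hx⟩

theorem MidpointConvex.add_inner_le_of_mem_superDiff (hg : MidpointConvex g)
    (hq : q ∈ SuperDiff g x) (y : Euc N) : g x + ⟪q, y - x⟫ ≤ g y := by
  set h := y - x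
  refine le_of_forall_pos_le_add fun ε hε => ?_
  set ε' := ε / (‖h‖ + 1)
  have hε' : ε' * ‖h‖ ≤ ε := by
    rw [div_mul_eq_mul_div, div_le_iff₀ (by positivity)]
    nlinarith [norm_nonneg h]
  have hlim : Tendsto (fun k : ℕ => x - (2⁻¹ : ℝ) ^ k • h) atTop (𝓝 x) := by
    simpa using ((tendsto_pow_atTop_nhds_zero_of_lt_one (r := (2⁻¹ : ℝ)) (by norm_num)
      (by norm_num)).smul_const h).const_sub x
  obtain ⟨k, hk⟩ := (hlim.eventually (mem_superDiff_iff.1 hq ε' (by positivity))).exists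
  set s : ℝ := (2⁻¹ : ℝ) ^ k
  have hs : 0 < s := by positivity
  rw [show x - s • h - x = -(s • h) by abel, inner_neg_right, real_inner_smul_right, norm_neg,
    norm_smul, Real.norm_of_nonneg hs.le] at hk
  have hmid := hg x (s • h)
  have hdy : g (x + s • h) ≤ (1 - s) * g x + s * g y := hg.apply_add_dyadic_smul_le k x y
  have key : s * (g x + ⟪q, h⟫) ≤ s * (g y + ε' * ‖h‖) := by linarith
  linarith [le_of_mul_le_mul_left key hs]

theorem Semiconvex.midpointConvex (hsc : Semiconvex C v) :
    MidpointConvex fun y => v y + C / 2 * ‖y‖ ^ 2 := by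
  intro x h
  have := hsc x h
  beta_reduce
  rw [norm_add_sq_real, norm_sub_sq_real]
  linarith

theorem Semiconvex.continuous (hC : 0 ≤ C) (hsc : Semiconvex C v) {z : Euc N} {δ M : ℝ}
    (hδ : 0 < δ) (hM : ∀ u ∈ ball z δ, v u ≤ M) : Continuous v := by
  have hw : Continuous fun y => v y + C / 2 * ‖y‖ ^ 2 := by
    refine hsc.midpointConvex.continuous_of_le_on_ball (z := z) hδ
      (M := M + C / 2 * (‖z‖ + δ) ^ 2) fun u hu => ?_
    have hu' : ‖u‖ ≤ ‖z‖ + δ := (norm_lt_of_mem_ball hu).le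
    gcongr
    exact hM u hu
  have h : Continuous fun y => v y + C / 2 * ‖y‖ ^ 2 - C / 2 * ‖y‖ ^ 2 := hw.sub (by fun_prop)
  simpa using h

theorem Semiconvex.add_inner_sub_le_of_mem_superDiff (hsc : Semiconvex C v)
    (hp : p ∈ SuperDiff v x) (y : Euc N) :
    v x + ⟪p, y - x⟫ - C / 2 * ‖y - x‖ ^ 2 ≤ v y := by
  have hq : p + C • x ∈ SuperDiff (fun y => v y + C / 2 * ‖y‖ ^ 2) x :=
    add_mem_superDiff_add hp <| by
      simpa [show 2 * (C / 2) = C by ring] using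
        (hasFDerivAt_mul_norm_sub_sq (C / 2) 0 x).mem_superDiff
  have h := hsc.midpointConvex.add_inner_le_of_mem_superDiff hq y
  simp only [inner_add_left, real_inner_smul_left, inner_sub_right,
    real_inner_self_eq_norm_sq] at h
  rw [norm_sub_sq_real, inner_sub_right, real_inner_comm x y]
  linarith

theorem Semiconvex.closedBall_subset_of_mem_superDiff (hC : 0 ≤ C) (hsc : Semiconvex C v)
    (hp : p ∈ SuperDiff v x) (hp0 : p ≠ 0) {t : ℝ} (ht : C * t ≤ ‖p‖) :
    closedBall (x + t • ‖p‖⁻¹ • p) t ⊆ {y | v x ≤ v y} := by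
  intro y hy
  set e := ‖p‖⁻¹ • p
  have he : ‖e‖ = 1 := norm_smul_inv_norm hp0
  rw [mem_closedBall_iff_norm, show y - (x + t • e) = (y - x) - t • e by abel] at hy
  have hd := norm_sq_le_two_mul_inner_of_norm_sub_smul_le he hy
  have hpe : ⟪p, y - x⟫ = ‖p‖ * ⟪e, y - x⟫ := by
    rw [real_inner_smul_left, ← mul_assoc, mul_inv_cancel₀ (norm_ne_zero_iff.2 hp0), one_mul]
  have he0 : 0 ≤ ⟪e, y - x⟫ := by
    have ht0 : 0 ≤ t := (norm_nonneg _).trans hy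
    by_contra! hneg
    have hcs := neg_le_of_abs_le (abs_real_inner_le_norm e (y - x))
    rw [he, one_mul] at hcs
    nlinarith [mul_nonpos_of_nonneg_of_nonpos ht0 hneg.le]
  have hglob := hsc.add_inner_sub_le_of_mem_superDiff hp y
  show v x ≤ v y
  nlinarith [mul_le_mul_of_nonneg_left hd hC, mul_le_mul_of_nonneg_right ht he0]

theorem Semiconvex.exists_ball_subset_of_tendsto (hC : 0 < C) (hsc : Semiconvex C v)
    {xs ps : ℕ → Euc N} {t : ℕ → ℝ} {a r : ℝ} (hr : 0 < r) (hxs : Tendsto xs atTop (𝓝 x))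
    (hvxs : Tendsto (fun n => v (xs n)) atTop (𝓝 a)) (hps : ∀ n, ps n ∈ SuperDiff v (xs n))
    (ht : Tendsto t atTop (𝓝 r)) (htp : ∀ n, C * t n ≤ ‖ps n‖) :
    ∃ q : Euc N, ‖q‖ = 1 ∧ ball (x + r • q) r ⊆ {y | a ≤ v y} := by
  have hps0 : ∀ᶠ n in atTop, ps n ≠ 0 := (ht.eventually (lt_mem_nhds hr)).mono fun n hn =>
    norm_pos_iff.1 ((mul_pos hC hn).trans_le (htp n))
  obtain ⟨q, hq, φ, hφ, hq_lim⟩ := (isCompact_sphere (0 : Euc N) 1).tendsto_subseq'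
    (hps0.mono fun n hn => by simpa using norm_smul_inv_norm (𝕜 := ℝ) hn).frequently
  refine ⟨q, by simpa using hq, fun y hy => ?_⟩
  have hφ' := hφ.tendsto_atTop
  have hcenters := (hxs.comp hφ').add ((ht.comp hφ').smul hq_lim)
  refine le_of_tendsto (hvxs.comp hφ') ?_
  filter_upwards [hφ'.eventually hps0, hcenters.eventually_mem_closedBall (ht.comp hφ') hy]
    with n hn hyn
  exact hsc.closedBall_subset_of_mem_superDiff hC.le (hps _) hn (htp _) hyn

end SuperDiff

theorem stmt15_general (N : ℕ)
    (v : Euc N → ℝ) (C : ℝ) (hC : 0 < C) (hsc : Semiconvex C v)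
    (η0 : ℝ) (hη0 : 0 < η0)
    (hH3 : ∀ x : Euc N, ∀ p ∈ SuperDiff v x, η0 ≤ |v x| + ‖p‖)
    (E : Set (Euc N)) (hE : IsClosed E)
    (hint : interior E = {x : Euc N | 0 < v x})
    (hfr : frontier E = {x : Euc N | v x = 0}) :
    ∀ x ∈ frontier E, ∃ p : Euc N, ‖p‖ = 1 ∧
      closedBall (x - (η0 / C) • p) (η0 / C) ⊆ E := by
  intro x hx
  have hE_eq := eq_setOf_nonneg_of_interior_of_frontier hE hint hfr
  have hvx : v x = 0 := by rw [hfr] at hx; exact hx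
  have hneg : ∀ y ∈ Eᶜ, v y < 0 := fun y hy => by simpa [hE_eq] using hy
  have hx_cl : x ∈ closure Eᶜ := (frontier_eq_closure_inter_closure.subset hx).2
  obtain ⟨z, hz⟩ := closure_nonempty_iff.1 ⟨x, hx_cl⟩
  obtain ⟨δ, hδ, hball⟩ := Metric.isOpen_iff.1 hE.isOpen_compl z hz
  have hv : Continuous v := hsc.continuous hC.le hδ fun u hu => (hneg u (hball hu)).le
  rw [← closure_setOf_superDiff_nonempty hv hE.isOpen_compl] at hx_cl
  obtain ⟨xs, hxs, hxs_lim⟩ := mem_closure_iff_seq_limit.1 hx_cl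
  choose ps hps using fun n => (hxs n).2
  have hvxs : Tendsto (fun n => v (xs n)) atTop (𝓝 0) := hvx ▸ (hv.tendsto x).comp hxs_lim
  have ht : Tendsto (fun n => (η0 + v (xs n)) / C) atTop (𝓝 (η0 / C)) := by
    simpa using (hvxs.const_add η0).div_const C
  have htp : ∀ n, C * ((η0 + v (xs n)) / C) ≤ ‖ps n‖ := fun n => by
    have := hH3 _ _ (hps n)
    rw [abs_of_neg (hneg _ (hxs n).1)] at this
    rw [mul_div_cancel₀ _ hC.ne']
    linarith
  obtain ⟨q, hq, hsub⟩ :=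
    hsc.exists_ball_subset_of_tendsto hC (div_pos hη0 hC) hxs_lim hvxs hps ht htp
  refine ⟨-q, by rwa [norm_neg], ?_⟩
  rw [smul_neg, sub_neg_eq_add, ← closure_ball _ (div_pos hη0 hC).ne', hE.closure_subset_iff,
    hE_eq]
  exact hsub

/-- a set represented by a semiconvex function with a lower-bound gradient
estimate satisfies the interior ball property of radius η0/C. -/
theorem stmt15 (N : ℕ) (hN : 1 ≤ N)
    (v : Euc N → ℝ) (C : ℝ) (hC : 0 < C) (hsc : Semiconvex C v)
    (η0 : ℝ) (hη0 : 0 < η0)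
    (hH3 : ∀ x : Euc N, ∀ p ∈ SuperDiff v x, η0 ≤ |v x| + ‖p‖)
    (E : Set (Euc N)) (hE : IsClosed E)
    (hint : interior E = {x : Euc N | 0 < v x})
    (hfr : frontier E = {x : Euc N | v x = 0}) :
    ∀ x ∈ frontier E, ∃ p : Euc N, ‖p‖ = 1 ∧
      closedBall (x - (η0 / C) • p) (η0 / C) ⊆ E :=
  stmt15_general N v C hC hsc η0 hη0 hH3 E hE hint hfr
end
end

section
/- Let N ≥ 1, let v : ℝ^N → ℝ be semiconvex with constant C > 0, let η0 > 0, let x ∈ ℝ^N with v(x) = 0, and let p ∈ D⁻v(x) satisfy |p| ≥ η0. Then v(y) ≥ 0 for every y in the open ball B(x + (η0/(C|p|))·p, η0/C); in particular, the closed ball B̄(x + (η0/(C|p|))·p, η0/C) is contained in {z : v(z) ≥ 0}. -/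
open Set MeasureTheory Filter Metric
open scoped Topology ENNReal NNReal RealInnerProductSpace symmDiff

noncomputable section

/-- The Fréchet subdifferential D⁻v(x): the set of p with
liminf_{y→x} (v(y) − v(x) − ⟨p, y−x⟩)/|y−x| ≥ 0. -/
def SubDiff {N : ℕ} (v : Euc N → ℝ) (x : Euc N) : Set (Euc N) :=
  {p | ∀ ε > 0, ∀ᶠ y in 𝓝[≠] x, -ε ≤ (v y - v x - ⟪p, y - x⟫) / ‖y - x‖}

/-!
Along every line through `x`, the function `v + (C/2)‖·‖²` is midpoint convex, so its increment
over the dyadic step `2⁻ⁿ • h` is at most `2⁻ⁿ` times its increment over `h`. Comparing with the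
subgradient inequality at small steps gives the quadratic minorant
`v (x + h) ≥ v x + ⟪p, h⟫ - (C/2)‖h‖²`. On the ball `closedBall (x + s • p) (s‖p‖)` one has
`‖h‖² ≤ 2 s ⟪p, h⟫`, so the minorant is at least `v x + (1 - C s)⟪p, h⟫ ≥ v x` when `C s ≤ 1`;
`s = η0 / (C‖p‖)` is the choice with radius `η0 / C`.
-/

theorem sub_le_half_pow_mul_of_midpoint {g : ℝ → ℝ}
    (hg : ∀ s t, 2 * g ((s + t) / 2) ≤ g s + g t) (n : ℕ) :
    g ((1 / 2) ^ n) - g 0 ≤ (1 / 2) ^ n * (g 1 - g 0) := by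
  induction n with
  | zero => simp
  | succ n ih =>
    have hhalf := hg 0 ((1 / 2) ^ n)
    rw [show (0 + (1 / 2 : ℝ) ^ n) / 2 = (1 / 2) ^ (n + 1) by ring] at hhalf
    rw [pow_succ] at hhalf ⊢
    linarith

theorem norm_sq_le_two_mul_inner_of_norm_sub_le {F : Type*} [NormedAddCommGroup F]
    [InnerProductSpace ℝ F] {a h : F} (hh : ‖h - a‖ ≤ ‖a‖) : ‖h‖ ^ 2 ≤ 2 * ⟪a, h⟫ := by
  have hsq := pow_le_pow_left₀ (norm_nonneg _) hh 2
  rw [norm_sub_sq_real, real_inner_comm] at hsq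
  linarith

theorem SubDiff.eventually_along_ray {N : ℕ} {v : Euc N → ℝ} {x p : Euc N} (hp : p ∈ SubDiff v x)
    {h : Euc N} (hh : h ≠ 0) {ε : ℝ} (hε : 0 < ε) :
    ∀ᶠ t in 𝓝[>] 0, t * ⟪p, h⟫ - ε * t ≤ v (x + t • h) - v x := by
  have hray : Tendsto (fun t : ℝ => x + t • h) (𝓝[>] 0) (𝓝[≠] x) := by
    refine tendsto_nhdsWithin_of_tendsto_nhds_of_eventually_within _ ?_ ?_
    · exact (Continuous.tendsto' (by fun_prop) 0 x (by simp)).mono_left nhdsWithin_le_nhds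
    · filter_upwards [self_mem_nhdsWithin] with t ht
      simpa using smul_ne_zero (ne_of_gt (mem_Ioi.mp ht)) hh
  filter_upwards [hray.eventually (hp (ε / ‖h‖) (by positivity)), self_mem_nhdsWithin]
    with t hq (ht : 0 < t)
  have hnorm : ‖(x + t • h) - x‖ = t * ‖h‖ := by
    rw [add_sub_cancel_left, norm_smul, Real.norm_eq_abs, abs_of_pos ht]
  rw [hnorm, add_sub_cancel_left, real_inner_smul_right, le_div_iff₀ (by positivity)] at hq
  have hε_scale : ε / ‖h‖ * (t * ‖h‖) = ε * t := by field_simp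
  linarith

namespace Semiconvex

variable {N : ℕ} {C : ℝ} {v : Euc N → ℝ}

/-- The second differences of `v + (C/2)‖·‖²` are those of `v` plus `C‖h‖²`, hence nonnegative. -/
theorem midpoint_along_line (hsc : Semiconvex C v) (x h : Euc N) (s t : ℝ) :
    2 * (v (x + ((s + t) / 2) • h) + C / 2 * ((s + t) / 2) ^ 2 * ‖h‖ ^ 2) ≤
      (v (x + s • h) + C / 2 * s ^ 2 * ‖h‖ ^ 2) + (v (x + t • h) + C / 2 * t ^ 2 * ‖h‖ ^ 2) := by
  have key := hsc (x + ((s + t) / 2) • h) (((t - s) / 2) • h)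
  rw [add_assoc, ← add_smul, add_sub_assoc, ← sub_smul, norm_smul, mul_pow, Real.norm_eq_abs,
    sq_abs] at key
  rw [show (s + t) / 2 + (t - s) / 2 = t by ring, show (s + t) / 2 - (t - s) / 2 = s by ring] at key
  nlinarith

theorem le_apply_add_of_mem_subDiff (hC : 0 ≤ C) (hsc : Semiconvex C v) {x p : Euc N}
    (hp : p ∈ SubDiff v x) (h : Euc N) : v x + ⟪p, h⟫ - C / 2 * ‖h‖ ^ 2 ≤ v (x + h) := by
  rcases eq_or_ne h 0 with rfl | hh
  · simp
  refine le_of_forall_pos_le_add fun ε hε => ?_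
  obtain ⟨n, hray⟩ := ((tendsto_pow_atTop_nhdsWithin_zero_of_lt_one (by norm_num : (0 : ℝ) < 1 / 2)
    (by norm_num)).eventually (SubDiff.eventually_along_ray hp hh hε)).exists
  set t : ℝ := (1 / 2) ^ n
  have hchord : v (x + t • h) + C / 2 * t ^ 2 * ‖h‖ ^ 2 - v x ≤
      t * (v (x + h) + C / 2 * ‖h‖ ^ 2 - v x) := by
    simpa only [zero_smul, add_zero, one_smul, one_pow, mul_one, zero_pow two_ne_zero, mul_zero,
      zero_mul] using sub_le_half_pow_mul_of_midpoint
      (g := fun t => v (x + t • h) + C / 2 * t ^ 2 * ‖h‖ ^ 2) (hsc.midpoint_along_line x h) n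
  have hquad : 0 ≤ C / 2 * t ^ 2 * ‖h‖ ^ 2 := by positivity
  refine le_of_mul_le_mul_left ?_ (by positivity : 0 < t)
  linarith

theorem le_of_mem_closedBall_of_mem_subDiff (hC : 0 ≤ C) (hsc : Semiconvex C v) {x p : Euc N}
    (hp : p ∈ SubDiff v x) {s : ℝ} (hs : 0 < s) (hCs : C * s ≤ 1) :
    ∀ y ∈ closedBall (x + s • p) (s * ‖p‖), v x ≤ v y := by
  intro y hy
  have hy' : ‖(y - x) - s • p‖ ≤ ‖s • p‖ := by
    rwa [norm_smul, Real.norm_eq_abs, abs_of_pos hs, sub_sub, ← dist_eq_norm, ← mem_closedBall]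
  have hinner := norm_sq_le_two_mul_inner_of_norm_sub_le hy'
  rw [real_inner_smul_left] at hinner
  have hgrowth := hsc.le_apply_add_of_mem_subDiff hC hp (y - x)
  rw [add_sub_cancel] at hgrowth
  have hpos : 0 ≤ ⟪p, y - x⟫ := by nlinarith [sq_nonneg ‖y - x‖]
  nlinarith [mul_le_mul_of_nonneg_left hinner hC, mul_nonneg (sub_nonneg.mpr hCs) hpos]

end Semiconvex

theorem stmt16_general (N : ℕ)
    (v : Euc N → ℝ) (C : ℝ) (hC : 0 < C) (hsc : Semiconvex C v)
    (η0 : ℝ) (hη0 : 0 < η0)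
    (x : Euc N) (hx : v x = 0)
    (p : Euc N) (hp : p ∈ SubDiff v x) (hpη : η0 ≤ ‖p‖) :
    (∀ y ∈ ball (x + (η0 / (C * ‖p‖)) • p) (η0 / C), 0 ≤ v y) ∧
    closedBall (x + (η0 / (C * ‖p‖)) • p) (η0 / C) ⊆ {z : Euc N | 0 ≤ v z} := by
  have hp0 : 0 < ‖p‖ := hη0.trans_le hpη
  have hradius : η0 / (C * ‖p‖) * ‖p‖ = η0 / C := by field_simp
  have hCs : C * (η0 / (C * ‖p‖)) ≤ 1 := by
    calc C * (η0 / (C * ‖p‖)) = η0 / ‖p‖ := by field_simp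
      _ ≤ 1 := (div_le_one hp0).mpr hpη
  have hnonneg : ∀ y ∈ closedBall (x + (η0 / (C * ‖p‖)) • p) (η0 / C), 0 ≤ v y := by
    rw [← hradius, ← hx]
    exact hsc.le_of_mem_closedBall_of_mem_subDiff hC.le hp (by positivity) hCs
  exact ⟨fun y hy => hnonneg y (ball_subset_closedBall hy), hnonneg⟩

/-- a ball on which a semiconvex function is nonnegative, built from a
subgradient at a zero of the function. -/
theorem stmt16 (N : ℕ) (hN : 1 ≤ N)
    (v : Euc N → ℝ) (C : ℝ) (hC : 0 < C) (hsc : Semiconvex C v)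
    (η0 : ℝ) (hη0 : 0 < η0)
    (x : Euc N) (hx : v x = 0)
    (p : Euc N) (hp : p ∈ SubDiff v x) (hpη : η0 ≤ ‖p‖) :
    (∀ y ∈ ball (x + (η0 / (C * ‖p‖)) • p) (η0 / C), 0 ≤ v y) ∧
    closedBall (x + (η0 / (C * ‖p‖)) • p) (η0 / C) ⊆ {z : Euc N | 0 ≤ v z} :=
  stmt16_general N v C hC hsc η0 hη0 x hx p hp hpη
end
end

section
/- Let N ≥ 1, T > 0, let c : ℝ^N × [0,T] → ℝ be continuous satisfying (H1) with constants L1, L1', let u0 : ℝ^N → ℝ be Lipschitz continuous, and let u be the continuous viscosity solution of u_t = c(x,t)|Du| with initial datum u0. Then for all x ∈ ℝ^N and t ∈ [0,T]: u(x,t) ≤ max_{y : |y − x| ≤ L1' t} u0(y). -/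
open Set MeasureTheory Filter Metric
open scoped Topology ENNReal NNReal RealInnerProductSpace symmDiff

noncomputable section

/-!
Fix `(x0, t0)` and let `M` be the maximum of `u0` on the ball of radius `L t0` around `x0`. Since
`|c| ≤ L`, the cone function `M + A (‖x - x0‖ - L (t0 - t))⁺` is a supersolution of
`w_t = c |Dw|`, and for `A ≥ Lip u0` it lies above `u0` at `t = 0`. After smoothing the cone and
adding `η (1 + e^{κ (t - t0)})`, which makes the inequality strict and, for `κ` large, puts the
barrier above `u` at a later time `T'`, the viscosity subsolution inequality forbids `u - Φ` to
attain a positive maximum in the interior of a cylinder around `(x0, t0)`; hence `u ≤ Φ` there,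
and letting the perturbations vanish gives `u (x0, t0) ≤ M`. The endpoint `t = T` follows by
continuity.
-/

section SmoothNorm

variable {E : Type*} [NormedAddCommGroup E]

def smoothNorm (δ : ℝ) (v : E) : ℝ := √(δ ^ 2 + ‖v‖ ^ 2)

lemma norm_le_smoothNorm (δ : ℝ) (v : E) : ‖v‖ ≤ smoothNorm δ v :=
  Real.le_sqrt_of_sq_le (by nlinarith)

lemma smoothNorm_le (δ : ℝ) (v : E) : smoothNorm δ v ≤ |δ| + ‖v‖ := by
  rw [smoothNorm, Real.sqrt_le_left (by positivity)]
  nlinarith [sq_abs δ, abs_nonneg δ, norm_nonneg v]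

lemma sqrt_sq_add_sq_le_add_abs_sub (δ a b : ℝ) :
    √(δ ^ 2 + a ^ 2) ≤ √(δ ^ 2 + b ^ 2) + |a - b| := by
  have hb : |b| ≤ √(δ ^ 2 + b ^ 2) := Real.abs_le_sqrt (by nlinarith)
  have hS : √(δ ^ 2 + b ^ 2) ^ 2 = δ ^ 2 + b ^ 2 := Real.sq_sqrt (by positivity)
  rw [Real.sqrt_le_left (by positivity)]
  nlinarith [abs_mul_abs_self (a - b), le_abs_self (b * (a - b)), abs_mul b (a - b),
    mul_le_mul_of_nonneg_right hb (abs_nonneg (a - b))]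

lemma lipschitzWith_smoothNorm (δ : ℝ) : LipschitzWith 1 (smoothNorm (E := E) δ) := by
  refine LipschitzWith.of_dist_le_mul fun v w => ?_
  rw [NNReal.coe_one, one_mul, Real.dist_eq, dist_eq_norm]
  have hvw : smoothNorm δ v ≤ smoothNorm δ w + |‖v‖ - ‖w‖| := sqrt_sq_add_sq_le_add_abs_sub ..
  have hwv : smoothNorm δ w ≤ smoothNorm δ v + |‖w‖ - ‖v‖| := sqrt_sq_add_sq_le_add_abs_sub ..
  rw [abs_sub_comm] at hwv
  exact (abs_sub_le_iff.2 ⟨by linarith, by linarith⟩).trans (abs_norm_sub_norm_le v w)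

lemma contDiff_smoothNorm [InnerProductSpace ℝ E] {δ : ℝ} (hδ : δ ≠ 0) {n : WithTop ℕ∞} :
    ContDiff ℝ n (smoothNorm (E := E) δ) :=
  (contDiff_const.add (contDiff_norm_sq ℝ)).sqrt fun v => by positivity

end SmoothNorm

def smoothPosPart (δ s : ℝ) : ℝ := (s + smoothNorm δ s) / 2

lemma max_zero_le_smoothPosPart (δ s : ℝ) : max 0 s ≤ smoothPosPart δ s := by
  have := norm_le_smoothNorm δ s
  rw [Real.norm_eq_abs] at this
  rw [smoothPosPart]
  exact max_le (by linarith [neg_abs_le s]) (by linarith [le_abs_self s])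

lemma smoothPosPart_le (δ s : ℝ) : smoothPosPart δ s ≤ max 0 s + |δ| / 2 := by
  have := smoothNorm_le δ s
  rw [Real.norm_eq_abs] at this
  rw [smoothPosPart]
  rcases abs_cases s with ⟨h, _⟩ | ⟨h, _⟩ <;> linarith [le_max_left 0 s, le_max_right 0 s]

lemma contDiff_smoothPosPart {δ : ℝ} (hδ : δ ≠ 0) {n : WithTop ℕ∞} :
    ContDiff ℝ n (smoothPosPart δ) :=
  (contDiff_id.add (contDiff_smoothNorm hδ)).div_const 2

lemma monotone_smoothPosPart (δ : ℝ) : Monotone (smoothPosPart δ) := by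
  intro s t hst
  have h := (lipschitzWith_smoothNorm δ).dist_le_mul s t
  rw [NNReal.coe_one, one_mul, Real.dist_eq, Real.dist_eq, abs_sub_comm s t,
    abs_of_nonneg (sub_nonneg.2 hst)] at h
  rw [smoothPosPart, smoothPosPart]
  linarith [(abs_sub_le_iff.1 h).1]

section ConeBarrier

variable {E : Type*} [NormedAddCommGroup E]

/-- Smoothed `(‖x - x0‖ - L (t0 - t))⁺`, which vanishes on the backward cone of slope `L` with apex
`(x0, t0)`. -/
def coneBarrier (δ L : ℝ) (x0 : E) (t0 : ℝ) (x : E) (t : ℝ) : ℝ :=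
  smoothPosPart δ (smoothNorm δ (x - x0) - L * (t0 - t))

lemma max_zero_le_coneBarrier (δ L : ℝ) (x0 : E) (t0 : ℝ) (x : E) (t : ℝ) :
    max 0 (‖x - x0‖ - L * (t0 - t)) ≤ coneBarrier δ L x0 t0 x t :=
  (max_le_max le_rfl (by linarith [norm_le_smoothNorm δ (x - x0)])).trans
    (max_zero_le_smoothPosPart _ _)

lemma coneBarrier_self_le (δ L : ℝ) (x0 : E) (t0 : ℝ) : coneBarrier δ L x0 t0 x0 t0 ≤ 2 * |δ| := by
  have h := smoothNorm_le δ (x0 - x0)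
  rw [sub_self, norm_zero, add_zero] at h
  refine (smoothPosPart_le _ _).trans ?_
  rw [sub_self, sub_self, mul_zero, sub_zero]
  linarith [max_le (abs_nonneg δ) h, abs_nonneg δ]

lemma contDiff_coneBarrier [InnerProductSpace ℝ E] {δ : ℝ} (hδ : δ ≠ 0) (L : ℝ) (x0 : E) (t0 : ℝ)
    {n : WithTop ℕ∞} :
    ContDiff ℝ n (fun p : E × ℝ => coneBarrier δ L x0 t0 p.1 p.2) :=
  (contDiff_smoothPosPart hδ).comp
    (((contDiff_smoothNorm hδ).comp (contDiff_fst.sub contDiff_const)).sub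
      (contDiff_const.mul (contDiff_const.sub contDiff_snd)))

lemma coneBarrier_supersolution [InnerProductSpace ℝ E] {δ L : ℝ} (hδ : δ ≠ 0) (hL : 0 ≤ L)
    (x0 : E) (t0 : ℝ) (x : E) (t : ℝ) :
    ∃ (d : ℝ) (f' : E →L[ℝ] ℝ), HasDerivAt (coneBarrier δ L x0 t0 x) d t ∧
      HasFDerivAt (fun y => coneBarrier δ L x0 t0 y t) f' x ∧ L * ‖f'‖ ≤ d := by
  set g : E → ℝ := fun y => smoothNorm δ (y - x0)
  set s := g x - L * (t0 - t)
  have hψ : HasDerivAt (smoothPosPart δ) (deriv (smoothPosPart δ) s) s :=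
    ((contDiff_smoothPosPart hδ (n := 1)).differentiable one_ne_zero s).hasDerivAt
  have hg : HasFDerivAt g (fderiv ℝ g x) x :=
    (((contDiff_smoothNorm hδ (n := 1)).comp (contDiff_id.sub contDiff_const)).differentiable
      one_ne_zero x).hasFDerivAt
  have hg_lip : LipschitzWith 1 g :=
    ((lipschitzWith_smoothNorm δ).comp (IsometryEquiv.subRight x0).isometry.lipschitz).weaken
      (mul_one 1).le
  have hg_le : ‖fderiv ℝ g x‖ ≤ 1 := by
    simpa only [NNReal.coe_one] using norm_fderiv_le_of_lipschitz ℝ hg_lip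
  have hψ0 : 0 ≤ deriv (smoothPosPart δ) s := (monotone_smoothPosPart δ).deriv_nonneg
  refine ⟨deriv (smoothPosPart δ) s * L, deriv (smoothPosPart δ) s • fderiv ℝ g x, ?_, ?_, ?_⟩
  · refine hψ.comp t ?_
    simpa using ((hasDerivAt_id t).const_sub t0).const_mul L |>.const_sub (g x)
  · exact hψ.comp_hasFDerivAt x (hg.sub_const _)
  · rw [norm_smul, Real.norm_eq_abs, abs_of_nonneg hψ0, mul_comm _ L]
    exact mul_le_mul_of_nonneg_left (mul_le_of_le_one_right hψ0 hg_le) hL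

end ConeBarrier

lemma HasFDerivAt.norm_gradient {F : Type*} [NormedAddCommGroup F] [InnerProductSpace ℝ F]
    [CompleteSpace F] {f : F → ℝ} {f' : F →L[ℝ] ℝ} {x : F} (h : HasFDerivAt f f' x) :
    ‖gradient f x‖ = ‖f'‖ := by
  rw [gradient, h.fderiv, LinearIsometryEquiv.norm_map]

lemma mul_norm_gradient_lt_deriv_of_coneBarrier {E : Type*} [NormedAddCommGroup E]
    [InnerProductSpace ℝ E] [CompleteSpace E] {δ L A η κ k : ℝ} (hδ : δ ≠ 0) (hk : |k| ≤ L)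
    (hA : 0 ≤ A) (hη : 0 < η) (hκ : 0 < κ) (a : ℝ) (x0 : E) (t0 : ℝ) (x : E) (t : ℝ) :
    k * ‖gradient (fun y => a + η * Real.exp (κ * (t - t0)) + A * coneBarrier δ L x0 t0 y t) x‖ <
      deriv (fun s => a + η * Real.exp (κ * (s - t0)) + A * coneBarrier δ L x0 t0 x s) t := by
  have hL : 0 ≤ L := (abs_nonneg k).trans hk
  obtain ⟨d, f', hd, hf', hLd⟩ := coneBarrier_supersolution hδ hL x0 t0 x t
  have hexp : HasDerivAt (fun s => Real.exp (κ * (s - t0))) (Real.exp (κ * (t - t0)) * κ) t := by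
    simpa using ((hasDerivAt_id t).sub_const t0).const_mul κ |>.exp
  have hΦt : HasDerivAt (fun s => a + η * Real.exp (κ * (s - t0)) + A * coneBarrier δ L x0 t0 x s)
      (η * (Real.exp (κ * (t - t0)) * κ) + A * d) t :=
    ((hexp.const_mul η).const_add a).add (hd.const_mul A)
  have hΦx : HasFDerivAt
      (fun y => a + η * Real.exp (κ * (t - t0)) + A * coneBarrier δ L x0 t0 y t) (A • f') x :=
    (hf'.const_mul A).const_add _
  rw [hΦt.deriv, hΦx.norm_gradient, norm_smul, Real.norm_eq_abs, abs_of_nonneg hA]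
  have hgain : 0 < η * (Real.exp (κ * (t - t0)) * κ) := by positivity
  calc k * (A * ‖f'‖) ≤ L * (A * ‖f'‖) :=
        mul_le_mul_of_nonneg_right ((le_abs_self k).trans hk) (by positivity)
    _ = A * (L * ‖f'‖) := by ring
    _ ≤ A * d := mul_le_mul_of_nonneg_left hLd hA
    _ < η * (Real.exp (κ * (t - t0)) * κ) + A * d := lt_add_of_pos_left _ hgain

lemma LipschitzWith.le_sSup_image_closedBall_add {E : Type*} [NormedAddCommGroup E]
    [NormedSpace ℝ E] {f : E → ℝ} {K : ℝ≥0} (hf : LipschitzWith K f) (x0 : E) {ρ : ℝ}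
    (hρ : 0 ≤ ρ) (y : E) :
    f y ≤ sSup (f '' closedBall x0 ρ) + K * max 0 (dist y x0 - ρ) := by
  obtain ⟨z, hz, hyz⟩ : ∃ z ∈ closedBall x0 ρ, dist y z ≤ max 0 (dist y x0 - ρ) := by
    by_cases hy : dist y x0 ≤ ρ
    · exact ⟨y, hy, by simp⟩
    rw [not_le, dist_comm] at hy
    have hy0 : 0 < dist x0 y := hρ.trans_lt hy
    refine ⟨AffineMap.lineMap x0 y (ρ / dist x0 y), ?_, le_max_of_le_right ?_⟩
    · rw [mem_closedBall, dist_lineMap_left, Real.norm_eq_abs, abs_of_nonneg (by positivity),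
        div_mul_cancel₀ _ hy0.ne']
    · rw [dist_comm, dist_lineMap_right, Real.norm_eq_abs,
        abs_of_nonneg (sub_nonneg.2 ((div_le_one hy0).2 hy.le)), sub_mul,
        div_mul_cancel₀ _ hy0.ne', one_mul, dist_comm]
  have hbdd : BddAbove (f '' closedBall x0 ρ) := (hf.isBounded_image isBounded_closedBall).bddAbove
  calc f y ≤ f z + K * dist y z := by
        linarith [le_abs_self (f y - f z), Real.dist_eq (f y) (f z) ▸ hf.dist_le_mul y z]
    _ ≤ sSup (f '' closedBall x0 ρ) + K * max 0 (dist y x0 - ρ) :=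
        add_le_add (le_csSup hbdd (mem_image_of_mem f hz)) (by gcongr)

namespace IsViscositySolution

variable {N : ℕ} {T : ℝ} {c u : Euc N → ℝ → ℝ} {u0 : Euc N → ℝ}

theorem le_of_strictSupersolution_s18 (hu : IsViscositySolution N T c u u0)
    (huc : ContinuousOn (fun p : Euc N × ℝ => u p.1 p.2) (univ ×ˢ Icc 0 T))
    {Φ : Euc N → ℝ → ℝ} (hΦ : ContDiff ℝ 1 (fun p : Euc N × ℝ => Φ p.1 p.2))
    {Q U : Set (Euc N × ℝ)} (hQ : IsCompact Q) (hQT : Q ⊆ univ ×ˢ Icc 0 T)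
    (hU : IsOpen U) (hUQ : U ⊆ Q) (hUT : U ⊆ univ ×ˢ Ioo 0 T)
    (hsuper : ∀ p ∈ U, c p.1 p.2 * ‖gradient (fun x => Φ x p.2) p.1‖ < deriv (Φ p.1) p.2)
    (hbdry : ∀ p ∈ Q \ U, u p.1 p.2 ≤ Φ p.1 p.2) :
    ∀ p ∈ Q, u p.1 p.2 ≤ Φ p.1 p.2 := by
  by_contra! ⟨p, hpQ, hp⟩
  obtain ⟨q, hqQ, hmax⟩ :=
    hQ.exists_isMaxOn ⟨p, hpQ⟩ ((huc.mono hQT).sub hΦ.continuous.continuousOn)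
  have hqU : q ∈ U := by
    by_contra hqU
    have hpq := isMaxOn_iff.1 hmax p hpQ
    simp only [Pi.sub_apply] at hpq
    linarith [hbdry q ⟨hqQ, hqU⟩]
  have hloc := (hmax.isLocalMax (mem_of_superset (hU.mem_nhds hqU) hUQ)).on (univ ×ˢ Icc 0 T)
  linarith [(hu.2 Φ hΦ q.1 q.2 (hUT hqU).2).1 hloc, hsuper q hqU]

/-- The barrier is `M + η + η e^{κ (t - t0)} + A w` with `w` the smoothed cone: `A ≥ K` makes it
dominate `u0` at `t = 0`, `A ≥ C - M` makes it dominate `u` on the lateral boundary, and `κ` is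
chosen so that it dominates `u` at `t = T'`; at `(x0, t0)` it is at most `M + 3η`. -/
theorem le_sSup_image_closedBall_add_of_le (hu : IsViscositySolution N T c u u0)
    (huc : ContinuousOn (fun p : Euc N × ℝ => u p.1 p.2) (univ ×ˢ Icc 0 T))
    {L : ℝ} (hc : ∀ x, ∀ t ∈ Icc 0 T, |c x t| ≤ L) {K : ℝ≥0} (hu0 : LipschitzWith K u0)
    {x0 : Euc N} {t0 T' : ℝ} (ht0 : 0 < t0) (ht0T' : t0 < T') (hT'T : T' < T) {C : ℝ}
    (hMC : sSup (u0 '' closedBall x0 (L * t0)) ≤ C)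
    (hC : ∀ p ∈ closedBall x0 (L * t0 + 1) ×ˢ Icc 0 T', u p.1 p.2 ≤ C) {ε : ℝ} (hε : 0 < ε) :
    u x0 t0 ≤ sSup (u0 '' closedBall x0 (L * t0)) + ε := by
  have hL : 0 ≤ L := (abs_nonneg _).trans (hc x0 t0 ⟨ht0.le, by linarith⟩)
  set M := sSup (u0 '' closedBall x0 (L * t0))
  set η := ε / 3
  set A := K + (C - M) + 1
  set δ := η / (2 * A)
  set κ := (C - M + 1) / (η * (T' - t0))
  have hη : 0 < η := by positivity
  have hA : 0 < A := by positivity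
  have hδ : 0 < δ := by positivity
  have hκ : 0 < κ := div_pos (by linarith) (mul_pos hη (by linarith))
  set Φ : Euc N → ℝ → ℝ := fun x t =>
    M + η + η * Real.exp (κ * (t - t0)) + A * coneBarrier δ L x0 t0 x t
  have hΦ_cone : ∀ x t, M + A * max 0 (‖x - x0‖ - L * (t0 - t)) ≤ Φ x t := fun x t => by
    have := mul_le_mul_of_nonneg_left (max_zero_le_coneBarrier δ L x0 t0 x t) hA.le
    have : 0 < η * Real.exp (κ * (t - t0)) := by positivity
    linarith
  have hΦ_exp : ∀ x t, M + η * Real.exp (κ * (t - t0)) ≤ Φ x t := fun x t => by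
    have := mul_nonneg hA.le ((le_max_left _ _).trans (max_zero_le_coneBarrier δ L x0 t0 x t))
    linarith
  have hΦ_smooth : ContDiff ℝ 1 (fun p : Euc N × ℝ => Φ p.1 p.2) :=
    ((contDiff_const.add (contDiff_const.mul (Real.contDiff_exp.comp
      (contDiff_const.mul (contDiff_snd.sub contDiff_const))))).add
        (contDiff_const.mul (contDiff_coneBarrier hδ.ne' L x0 t0)))
  have hcomp := hu.le_of_strictSupersolution_s18 huc hΦ_smooth
    ((isCompact_closedBall x0 (L * t0 + 1)).prod isCompact_Icc)
    (prod_mono (subset_univ _) (Icc_subset_Icc_right (by linarith)))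
    (isOpen_ball.prod isOpen_Ioo) (prod_mono ball_subset_closedBall Ioo_subset_Icc_self)
    (prod_mono (subset_univ _) (Ioo_subset_Ioo_right (by linarith)))
    (fun p hp => mul_norm_gradient_lt_deriv_of_coneBarrier hδ.ne'
      (hc p.1 p.2 ⟨hp.2.1.le, (hp.2.2.trans hT'T).le⟩) hA.le hη hκ _ x0 t0 p.1 p.2) ?_
  · calc u x0 t0 ≤ Φ x0 t0 :=
          hcomp (x0, t0) ⟨mem_closedBall_self (by positivity), ht0.le, ht0T'.le⟩
      _ ≤ M + η + η + A * (2 * δ) := by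
          have := mul_le_mul_of_nonneg_left (coneBarrier_self_le δ L x0 t0) hA.le
          simp only [Φ, sub_self, mul_zero, Real.exp_zero, mul_one, abs_of_pos hδ] at this ⊢
          linarith
      _ = M + ε := by
          simp only [δ, η]
          field_simp
          ring
  rintro ⟨x, t⟩ ⟨⟨hx, ht0', htT'⟩, hxt⟩
  simp only [mem_prod, mem_ball, mem_Ioo, not_and_or, not_lt] at hx hxt
  rcases hxt with hxR | ht | ht
  · have hcone : 1 ≤ max 0 (‖x - x0‖ - L * (t0 - t)) :=
      le_max_of_le_right (by rw [← dist_eq_norm]; nlinarith)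
    calc u x t ≤ C := hC (x, t) ⟨hx, ht0', htT'⟩
      _ ≤ M + A * 1 := by linarith [K.coe_nonneg]
      _ ≤ M + A * max 0 (‖x - x0‖ - L * (t0 - t)) := by gcongr
      _ ≤ Φ x t := hΦ_cone x t
  · obtain rfl : t = 0 := le_antisymm ht ht0'
    rw [hu.1 x]
    calc u0 x ≤ M + K * max 0 (dist x x0 - L * t0) :=
          hu0.le_sSup_image_closedBall_add x0 (by positivity) x
      _ ≤ M + A * max 0 (‖x - x0‖ - L * (t0 - 0)) := by
          rw [sub_zero, dist_eq_norm]
          gcongr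
          linarith
      _ ≤ Φ x 0 := hΦ_cone x 0
  · obtain rfl : t = T' := le_antisymm htT' ht
    have hκη : η * (κ * (t - t0)) = C - M + 1 := by
      simp only [κ]
      field_simp [(sub_pos.2 ht0T').ne']
    calc u x t ≤ C := hC (x, t) ⟨hx, ht0', htT'⟩
      _ ≤ M + η * (κ * (t - t0)) := by linarith
      _ ≤ M + η * Real.exp (κ * (t - t0)) := by
          gcongr
          linarith [Real.add_one_le_exp (κ * (t - t0))]
      _ ≤ Φ x t := hΦ_exp x t

theorem le_sSup_image_closedBall_of_mem_Ioo (hu : IsViscositySolution N T c u u0)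
    (huc : ContinuousOn (fun p : Euc N × ℝ => u p.1 p.2) (univ ×ˢ Icc 0 T))
    {L : ℝ} (hc : ∀ x, ∀ t ∈ Icc 0 T, |c x t| ≤ L) {K : ℝ≥0} (hu0 : LipschitzWith K u0)
    (x0 : Euc N) {t0 : ℝ} (ht0 : t0 ∈ Ioo 0 T) :
    u x0 t0 ≤ sSup (u0 '' closedBall x0 (L * t0)) := by
  obtain ⟨ht0, ht0T⟩ := ht0
  have hQT : closedBall x0 (L * t0 + 1) ×ˢ Icc 0 ((t0 + T) / 2) ⊆ univ ×ˢ Icc 0 T :=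
    prod_mono (subset_univ _) (Icc_subset_Icc_right (by linarith))
  obtain ⟨C, hC⟩ := (((isCompact_closedBall _ _).prod isCompact_Icc).image_of_continuousOn
    (huc.mono hQT)).bddAbove
  exact le_of_forall_pos_le_add fun ε hε => hu.le_sSup_image_closedBall_add_of_le huc hc hu0 ht0
    (by linarith) (by linarith) (le_max_right C _)
    (fun p hp => (hC (mem_image_of_mem _ hp)).trans (le_max_left _ _)) hε

theorem le_sSup_image_closedBall (hu : IsViscositySolution N T c u u0)
    (huc : ContinuousOn (fun p : Euc N × ℝ => u p.1 p.2) (univ ×ˢ Icc 0 T))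
    {L : ℝ} (hc : ∀ x, ∀ t ∈ Icc 0 T, |c x t| ≤ L) {K : ℝ≥0} (hu0 : LipschitzWith K u0)
    (x : Euc N) {t : ℝ} (ht : t ∈ Icc 0 T) :
    u x t ≤ sSup (u0 '' closedBall x (L * t)) := by
  rcases ht.1.eq_or_lt with rfl | ht0
  · simp [hu.1 x]
  have hL : 0 ≤ L := (abs_nonneg _).trans (hc x t ht)
  have hcont : ContinuousWithinAt (fun s => u x s) (Ioo 0 t) t :=
    ((huc.comp (continuous_const.prodMk continuous_id).continuousOn fun s hs => ⟨mem_univ x, hs⟩)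
      t ⟨ht0.le, ht.2⟩).mono (Ioo_subset_Icc_self.trans (Icc_subset_Icc_right ht.2))
  refine hcont.closure_le (by rw [closure_Ioo ht0.ne]; exact ⟨ht0.le, le_rfl⟩)
    continuousWithinAt_const fun s hs => ?_
  calc u x s ≤ sSup (u0 '' closedBall x (L * s)) :=
        hu.le_sSup_image_closedBall_of_mem_Ioo huc hc hu0 x ⟨hs.1, hs.2.trans_le ht.2⟩
    _ ≤ sSup (u0 '' closedBall x (L * t)) :=
        csSup_le_csSup (hu0.isBounded_image isBounded_closedBall).bddAbove
          ⟨u0 x, mem_image_of_mem _ (mem_closedBall_self (by nlinarith [hs.1]))⟩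
          (image_mono (closedBall_subset_closedBall (by nlinarith [hs.2])))

end IsViscositySolution

theorem stmt18_general (N : ℕ) (T : ℝ)
    (c : Euc N → ℝ → ℝ)
    (L1 L1' : ℝ)
    (hH1 : ∀ x y : Euc N, ∀ t ∈ Set.Icc (0 : ℝ) T,
      |c x t - c y t| ≤ L1 * ‖x - y‖ ∧ |c x t| ≤ L1')
    (u0 : Euc N → ℝ) (K : ℝ≥0) (hu0 : LipschitzWith K u0)
    (u : Euc N → ℝ → ℝ)
    (huc : ContinuousOn (fun p : Euc N × ℝ => u p.1 p.2)
      ((Set.univ : Set (Euc N)) ×ˢ Set.Icc (0 : ℝ) T))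
    (husol : IsViscositySolution N T c u u0) :
    ∀ x : Euc N, ∀ t ∈ Set.Icc (0 : ℝ) T,
      u x t ≤ sSup (u0 '' closedBall x (L1' * t)) :=
  fun x _ ht => husol.le_sSup_image_closedBall huc (fun y s hs => (hH1 y y s hs).2) hu0 x ht

/-- Oleinik–Lax type upper bound for the solution. -/
theorem stmt18 (N : ℕ) (hN : 1 ≤ N) (T : ℝ) (hT : 0 < T)
    (c : Euc N → ℝ → ℝ)
    (hc : ContinuousOn (fun p : Euc N × ℝ => c p.1 p.2)
      ((Set.univ : Set (Euc N)) ×ˢ Set.Icc (0 : ℝ) T))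
    (L1 L1' : ℝ) (hL1 : 0 < L1) (hL1' : 0 < L1')
    (hH1 : ∀ x y : Euc N, ∀ t ∈ Set.Icc (0 : ℝ) T,
      |c x t - c y t| ≤ L1 * ‖x - y‖ ∧ |c x t| ≤ L1')
    (u0 : Euc N → ℝ) (K : ℝ≥0) (hu0 : LipschitzWith K u0)
    (u : Euc N → ℝ → ℝ)
    (huc : ContinuousOn (fun p : Euc N × ℝ => u p.1 p.2)
      ((Set.univ : Set (Euc N)) ×ˢ Set.Icc (0 : ℝ) T))
    (husol : IsViscositySolution N T c u u0) :
    ∀ x : Euc N, ∀ t ∈ Set.Icc (0 : ℝ) T,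
      u x t ≤ sSup (u0 '' closedBall x (L1' * t)) :=
  stmt18_general N T c L1 L1' hH1 u0 K hu0 u huc husol
end
end
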